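/- Let θi(u1,u2,u3) denote the inner angle at vertex i of the triangle formed by three mutually externally tangent circles of radii e^{u1}, e^{u2}, e^{u3}. Then ∂θi/∂uj > 0 for all i ≠ j, and ∂θi/∂ui < 0 for each i. -/
import Mathlib


open Real

/-- Inner angle at the vertex of radius `a` in the triangle with side lengths
`a+b, a+c, b+c` formed by three mutually externally tangent circles. -/
noncomputable def ang (a b c : ℝ) : ℝ :=
  Real.arccos (((a + b) ^ 2 + (a + c) ^ 2 - (b + c) ^ 2) / (2 * (a + b) * (a + c)))

/-- `theta i u` is the inner angle at vertex `i` of the triangle formed by three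
mutually externally tangent circles of radii `e^(u 0), e^(u 1), e^(u 2)`. -/
noncomputable def theta (i : Fin 3) (u : Fin 3 → ℝ) : ℝ :=
  ang (Real.exp (u i)) (Real.exp (u (i + 1))) (Real.exp (u (i + 2)))

lemma ang_symm (a b c : ℝ) : ang a b c = ang a c b := by
  unfold ang
  ring_nf

lemma deriv_ang_fst (b c x : ℝ) (hb : 0 < b) (hc : 0 < c) :
    deriv (fun t => ang (Real.exp t) b c) x < 0 := by
  have ha : 0 < Real.exp x := Real.exp_pos x
  set a := Real.exp x with ha'
  have hD : (0:ℝ) < 2 * (a + b) * (a + c) := by positivity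
  have hA : HasDerivAt Real.exp a x := Real.hasDerivAt_exp x
  have h1 : HasDerivAt (fun t => Real.exp t + b) a x := hA.add_const b
  have h2 : HasDerivAt (fun t => Real.exp t + c) a x := hA.add_const c
  have hN : HasDerivAt (fun t => (Real.exp t + b) ^ 2 + (Real.exp t + c) ^ 2 - (b + c) ^ 2)
      (((2:ℕ) * (a + b) ^ 1 * a) + ((2:ℕ) * (a + c) ^ 1 * a)) x := by
    exact ((h1.pow 2).add (h2.pow 2)).sub_const ((b + c) ^ 2)
  have hDf : HasDerivAt (fun t => 2 * (Real.exp t + b) * (Real.exp t + c))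
      ((2 * a) * (a + c) + (2 * (a + b)) * a) x := by
    exact (h1.const_mul 2).mul h2
  have hq : HasDerivAt (fun t => ((Real.exp t + b) ^ 2 + (Real.exp t + c) ^ 2 - (b + c) ^ 2) /
      (2 * (Real.exp t + b) * (Real.exp t + c)))
      (((((2:ℕ) * (a + b) ^ 1 * a) + ((2:ℕ) * (a + c) ^ 1 * a)) * (2 * (a + b) * (a + c)) -
        ((a + b) ^ 2 + (a + c) ^ 2 - (b + c) ^ 2) * ((2 * a) * (a + c) + (2 * (a + b)) * a)) /
        (2 * (a + b) * (a + c)) ^ 2) x := hN.div hDf (ne_of_gt hD)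
  set v : ℝ := ((a + b) ^ 2 + (a + c) ^ 2 - (b + c) ^ 2) / (2 * (a + b) * (a + c)) with hv
  have hlt : v < 1 := by
    rw [hv, div_lt_one hD]; nlinarith
  have hgt : (-1:ℝ) < v := by
    rw [hv, lt_div_iff₀ hD]; nlinarith
  have harc := Real.hasDerivAt_arccos (ne_of_gt hgt) (ne_of_lt hlt)
  have hcomp := harc.comp x hq
  have hs : 0 < Real.sqrt (1 - v ^ 2) := Real.sqrt_pos.mpr (by nlinarith)
  have hq' : 0 < ((((2:ℕ) * (a + b) ^ 1 * a) + ((2:ℕ) * (a + c) ^ 1 * a)) * (2 * (a + b) * (a + c)) -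
        ((a + b) ^ 2 + (a + c) ^ 2 - (b + c) ^ 2) * ((2 * a) * (a + c) + (2 * (a + b)) * a)) /
        (2 * (a + b) * (a + c)) ^ 2 := by
    apply div_pos
    · have : ((((2:ℕ) * (a + b) ^ 1 * a) + ((2:ℕ) * (a + c) ^ 1 * a)) * (2 * (a + b) * (a + c)) -
        ((a + b) ^ 2 + (a + c) ^ 2 - (b + c) ^ 2) * ((2 * a) * (a + c) + (2 * (a + b)) * a))
        = 8 * a * b * c * (2 * a + b + c) := by push_cast; ring
      rw [this]; positivity
    · positivity
  have hd : deriv (fun t => ang (Real.exp t) b c) x =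
      -(1 / Real.sqrt (1 - v ^ 2)) *
      (((((2:ℕ) * (a + b) ^ 1 * a) + ((2:ℕ) * (a + c) ^ 1 * a)) * (2 * (a + b) * (a + c)) -
        ((a + b) ^ 2 + (a + c) ^ 2 - (b + c) ^ 2) * ((2 * a) * (a + c) + (2 * (a + b)) * a)) /
        (2 * (a + b) * (a + c)) ^ 2) := by
    apply HasDerivAt.deriv
    exact hcomp
  rw [hd]
  have := mul_pos (one_div_pos.mpr hs) hq'
  nlinarith

lemma deriv_ang_snd (a c x : ℝ) (ha : 0 < a) (hc : 0 < c) :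
    0 < deriv (fun t => ang a (Real.exp t) c) x := by
  have hb : 0 < Real.exp x := Real.exp_pos x
  set b := Real.exp x with hb'
  have hD : (0:ℝ) < 2 * (a + b) * (a + c) := by positivity
  have hB : HasDerivAt Real.exp b x := Real.hasDerivAt_exp x
  have h1 : HasDerivAt (fun t => a + Real.exp t) b x := hB.const_add a
  have h2 : HasDerivAt (fun t => Real.exp t + c) b x := hB.add_const c
  have hN : HasDerivAt (fun t => (a + Real.exp t) ^ 2 + (a + c) ^ 2 - (Real.exp t + c) ^ 2)
      (((2:ℕ) * (a + b) ^ 1 * b) - (2:ℕ) * (b + c) ^ 1 * b) x := by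
    exact (((h1.pow 2).add_const ((a + c) ^ 2)).sub (h2.pow 2))
  have hDf : HasDerivAt (fun t => 2 * (a + Real.exp t) * (a + c))
      ((2 * b) * (a + c)) x := (h1.const_mul 2).mul_const (a + c)
  have hq : HasDerivAt (fun t => ((a + Real.exp t) ^ 2 + (a + c) ^ 2 - (Real.exp t + c) ^ 2) /
      (2 * (a + Real.exp t) * (a + c)))
      (((((2:ℕ) * (a + b) ^ 1 * b) - (2:ℕ) * (b + c) ^ 1 * b) * (2 * (a + b) * (a + c)) -
        ((a + b) ^ 2 + (a + c) ^ 2 - (b + c) ^ 2) * ((2 * b) * (a + c))) /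
        (2 * (a + b) * (a + c)) ^ 2) x := hN.div hDf (ne_of_gt hD)
  set v : ℝ := ((a + b) ^ 2 + (a + c) ^ 2 - (b + c) ^ 2) / (2 * (a + b) * (a + c)) with hv
  have hlt : v < 1 := by rw [hv, div_lt_one hD]; nlinarith
  have hgt : (-1:ℝ) < v := by rw [hv, lt_div_iff₀ hD]; nlinarith
  have harc := Real.hasDerivAt_arccos (ne_of_gt hgt) (ne_of_lt hlt)
  have hcomp := harc.comp x hq
  have hs : 0 < Real.sqrt (1 - v ^ 2) := Real.sqrt_pos.mpr (by nlinarith)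
  have hq' : ((((2:ℕ) * (a + b) ^ 1 * b) - (2:ℕ) * (b + c) ^ 1 * b) * (2 * (a + b) * (a + c)) -
        ((a + b) ^ 2 + (a + c) ^ 2 - (b + c) ^ 2) * ((2 * b) * (a + c))) /
        (2 * (a + b) * (a + c)) ^ 2 < 0 := by
    apply div_neg_of_neg_of_pos
    · have : ((((2:ℕ) * (a + b) ^ 1 * b) - (2:ℕ) * (b + c) ^ 1 * b) * (2 * (a + b) * (a + c)) -
        ((a + b) ^ 2 + (a + c) ^ 2 - (b + c) ^ 2) * ((2 * b) * (a + c)))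
        = -(8 * a * b * c * (a + c)) := by push_cast; ring
      rw [this]
      have : 0 < 8 * a * b * c * (a + c) := by positivity
      linarith
    · positivity
  have hd : deriv (fun t => ang a (Real.exp t) c) x =
      -(1 / Real.sqrt (1 - v ^ 2)) *
      (((((2:ℕ) * (a + b) ^ 1 * b) - (2:ℕ) * (b + c) ^ 1 * b) * (2 * (a + b) * (a + c)) -
        ((a + b) ^ 2 + (a + c) ^ 2 - (b + c) ^ 2) * ((2 * b) * (a + c))) /
        (2 * (a + b) * (a + c)) ^ 2) := HasDerivAt.deriv hcomp
  rw [hd]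
  have h1 := one_div_pos.mpr hs
  nlinarith

lemma deriv_ang_trd (a b x : ℝ) (ha : 0 < a) (hb : 0 < b) :
    0 < deriv (fun t => ang a b (Real.exp t)) x := by
  have : (fun t => ang a b (Real.exp t)) = (fun t => ang a (Real.exp t) b) := by
    funext t; rw [ang_symm]
  rw [this]
  exact deriv_ang_snd a b x ha hb

lemma case_00 (u : Fin 3 → ℝ) :
    deriv (fun t => theta 0 (Function.update u 0 t)) (u 0) < 0 := by
  simp only [theta, Function.update_apply, show ((0:Fin 3)+1) = 1 from rfl,
    show ((0:Fin 3)+2) = 2 from rfl, if_pos rfl,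
    if_neg (show (1:Fin 3) ≠ 0 from by decide),
    if_neg (show (2:Fin 3) ≠ 0 from by decide)]
  exact deriv_ang_fst _ _ _ (Real.exp_pos _) (Real.exp_pos _)

lemma case_01 (u : Fin 3 → ℝ) :
    0 < deriv (fun t => theta 0 (Function.update u 1 t)) (u 1) := by
  simp only [theta, Function.update_apply, show ((0:Fin 3)+1) = 1 from rfl,
    show ((0:Fin 3)+2) = 2 from rfl, if_pos rfl,
    if_neg (show (0:Fin 3) ≠ 1 from by decide),
    if_neg (show (2:Fin 3) ≠ 1 from by decide)]
  exact deriv_ang_snd _ _ _ (Real.exp_pos _) (Real.exp_pos _)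

lemma case_02 (u : Fin 3 → ℝ) :
    0 < deriv (fun t => theta 0 (Function.update u 2 t)) (u 2) := by
  simp only [theta, Function.update_apply, show ((0:Fin 3)+1) = 1 from rfl,
    show ((0:Fin 3)+2) = 2 from rfl, if_pos rfl,
    if_neg (show (0:Fin 3) ≠ 2 from by decide),
    if_neg (show (1:Fin 3) ≠ 2 from by decide)]
  exact deriv_ang_trd _ _ _ (Real.exp_pos _) (Real.exp_pos _)

lemma case_10 (u : Fin 3 → ℝ) :
    0 < deriv (fun t => theta 1 (Function.update u 0 t)) (u 0) := by
  simp only [theta, Function.update_apply, show ((1:Fin 3)+1) = 2 from rfl,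
    show ((1:Fin 3)+2) = 0 from rfl, if_pos rfl,
    if_neg (show (1:Fin 3) ≠ 0 from by decide),
    if_neg (show (2:Fin 3) ≠ 0 from by decide)]
  exact deriv_ang_trd _ _ _ (Real.exp_pos _) (Real.exp_pos _)

lemma case_11 (u : Fin 3 → ℝ) :
    deriv (fun t => theta 1 (Function.update u 1 t)) (u 1) < 0 := by
  simp only [theta, Function.update_apply, show ((1:Fin 3)+1) = 2 from rfl,
    show ((1:Fin 3)+2) = 0 from rfl, if_pos rfl,
    if_neg (show (2:Fin 3) ≠ 1 from by decide),
    if_neg (show (0:Fin 3) ≠ 1 from by decide)]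
  exact deriv_ang_fst _ _ _ (Real.exp_pos _) (Real.exp_pos _)

lemma case_12 (u : Fin 3 → ℝ) :
    0 < deriv (fun t => theta 1 (Function.update u 2 t)) (u 2) := by
  simp only [theta, Function.update_apply, show ((1:Fin 3)+1) = 2 from rfl,
    show ((1:Fin 3)+2) = 0 from rfl, if_pos rfl,
    if_neg (show (1:Fin 3) ≠ 2 from by decide),
    if_neg (show (0:Fin 3) ≠ 2 from by decide)]
  exact deriv_ang_snd _ _ _ (Real.exp_pos _) (Real.exp_pos _)

lemma case_20 (u : Fin 3 → ℝ) :
    0 < deriv (fun t => theta 2 (Function.update u 0 t)) (u 0) := by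
  simp only [theta, Function.update_apply, show ((2:Fin 3)+1) = 0 from rfl,
    show ((2:Fin 3)+2) = 1 from rfl, if_pos rfl,
    if_neg (show (2:Fin 3) ≠ 0 from by decide),
    if_neg (show (1:Fin 3) ≠ 0 from by decide)]
  exact deriv_ang_snd _ _ _ (Real.exp_pos _) (Real.exp_pos _)

lemma case_21 (u : Fin 3 → ℝ) :
    0 < deriv (fun t => theta 2 (Function.update u 1 t)) (u 1) := by
  simp only [theta, Function.update_apply, show ((2:Fin 3)+1) = 0 from rfl,
    show ((2:Fin 3)+2) = 1 from rfl, if_pos rfl,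
    if_neg (show (2:Fin 3) ≠ 1 from by decide),
    if_neg (show (0:Fin 3) ≠ 1 from by decide)]
  exact deriv_ang_trd _ _ _ (Real.exp_pos _) (Real.exp_pos _)

lemma case_22 (u : Fin 3 → ℝ) :
    deriv (fun t => theta 2 (Function.update u 2 t)) (u 2) < 0 := by
  simp only [theta, Function.update_apply, show ((2:Fin 3)+1) = 0 from rfl,
    show ((2:Fin 3)+2) = 1 from rfl, if_pos rfl,
    if_neg (show (0:Fin 3) ≠ 2 from by decide),
    if_neg (show (1:Fin 3) ≠ 2 from by decide)]
  exact deriv_ang_fst _ _ _ (Real.exp_pos _) (Real.exp_pos _)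

theorem stmt_7 (u : Fin 3 → ℝ) :
    (∀ i j : Fin 3, i ≠ j → 0 < deriv (fun t => theta i (Function.update u j t)) (u j)) ∧
    (∀ i : Fin 3, deriv (fun t => theta i (Function.update u i t)) (u i) < 0) := by
  constructor
  · intro i j hij
    fin_cases i <;> fin_cases j
    · exact absurd rfl hij
    · exact case_01 u
    · exact case_02 u
    · exact case_10 u
    · exact absurd rfl hij
    · exact case_12 u
    · exact case_20 u
    · exact case_21 u
    · exact absurd rfl hij
  · intro i
    fin_cases i
    · exact case_00 u
    · exact case_11 u
    · exact case_22 u
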